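/- Fix ε, φ ∈ ℝ with |ε| > 1 and ε = φ. Then for every n there exist exactly two distinct eigenvalues μ_n and ν_n of T_{n,ε,φ} such that μ_n → ε + ε^{-1} and ν_n → ε + ε^{-1} as n → ∞, and for all sufficiently large n the eigenvalues μ_n and ν_n are precisely the eigenvalues of T_{n,ε,φ} lying outside [−2, 2]. -/

import Mathlib

/-!
Flipping the signs of alternate coordinates conjugates `T_{n,ε,ε}` into `-T_{n,-ε,-ε}`, so we may
assume `ε > 1`. For `z ≠ 0` the sequence `u k = (z - ε) z^(k+1) + (εz - 1) z^(-k)` satisfies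
`u (k-1) + u (k+1) = (z + z⁻¹) u k` and the left boundary condition `u (-1) = ε u 0`; the right one
holds exactly when `((z - ε) zⁿ)² = (εz - 1)²`. Fix `1 < r < ε`; for large `n` this equation has
a root in `(r, ε)` and one in `(ε, ε + 1)`, each within `O(r⁻ⁿ)` of `ε` since
`|z - ε| zⁿ = |εz - 1|`, which yields two eigenvalues `z + z⁻¹ > 2` converging to `ε + ε⁻¹`.

There are no further outliers. Off the diagonal `T` is the adjacency matrix of a path, whose
quadratic form is bounded by `2‖x‖²` in absolute value; with `ε ≥ 0` no eigenvalue lies below `-2`,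
and on the codimension-two subspace `x₀ = x_{n-1} = 0` the form of `T` is at most `2‖x‖²`, which
leaves room for at most two orthogonal eigenvectors with eigenvalue above `2`.
-/

open Matrix Real Filter

/-- The n×n tridiagonal matrix `T_{n,ε,φ}` with `(T)_{11} = ε`, `(T)_{nn} = φ`,
zero elsewhere on the diagonal, and ones on the first super- and subdiagonals. -/
noncomputable def Ttri (n : ℕ) (e f : ℝ) : Matrix (Fin n) (Fin n) ℝ :=
  fun i j =>
    if i = j then (if (i : ℕ) = 0 then e else if (i : ℕ) = n - 1 then f else 0)
    else if (i : ℕ) + 1 = (j : ℕ) ∨ (j : ℕ) + 1 = (i : ℕ) then 1 else 0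

/-- `x` is an eigenvalue of `T_{n,ε,φ}`. -/
def HasEigen (n : ℕ) (e f x : ℝ) : Prop :=
  ∃ v : Fin n → ℝ, v ≠ 0 ∧ (Ttri n e f).mulVec v = x • v

section SymmetricMatrix

variable {ι : Type*} [Fintype ι] {A : Matrix ι ι ℝ}

theorem dotProduct_self_pos {v : ι → ℝ} (hv : v ≠ 0) : 0 < v ⬝ᵥ v :=
  (Finset.sum_nonneg fun i _ => mul_self_nonneg (v i)).lt_of_ne
    (Ne.symm (dotProduct_self_eq_zero.not.2 hv))

theorem Matrix.IsSymm.dotProduct_eq_zero_of_mulVec_eq_smul (hA : A.IsSymm) {u w : ι → ℝ}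
    {a b : ℝ} (hu : A *ᵥ u = a • u) (hw : A *ᵥ w = b • w) (hab : a ≠ b) : u ⬝ᵥ w = 0 := by
  have h : a * (u ⬝ᵥ w) = b * (u ⬝ᵥ w) :=
    calc a * (u ⬝ᵥ w) = (A *ᵥ u) ⬝ᵥ w := by rw [hu, smul_dotProduct, smul_eq_mul]
      _ = u ⬝ᵥ (A *ᵥ w) := by rw [← vecMul_transpose, hA.eq, dotProduct_mulVec]
      _ = b * (u ⬝ᵥ w) := by rw [hw, dotProduct_smul, smul_eq_mul]
  exact (mul_eq_zero.1 (by linarith : (a - b) * (u ⬝ᵥ w) = 0)).resolve_left (sub_ne_zero.2 hab)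

theorem dotProduct_sum_smul_sum_smul {κ : Type*} [Fintype κ] [DecidableEq κ] {u : κ → ι → ℝ}
    (hu : Pairwise fun k l => u k ⬝ᵥ u l = 0) (a b : κ → ℝ) :
    (∑ k, a k • u k) ⬝ᵥ (∑ l, b l • u l) = ∑ k, a k * b k * (u k ⬝ᵥ u k) := by
  simp only [sum_dotProduct, dotProduct_sum, smul_dotProduct, dotProduct_smul, smul_eq_mul]
  refine Finset.sum_congr rfl fun k _ => ?_
  rw [Finset.sum_eq_single k (fun l _ hlk => by rw [hu hlk, mul_zero]) (by simp)]
  ring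

theorem Matrix.IsSymm.card_le_finrank_of_dotProduct_mulVec_le {V : Type*} [AddCommGroup V]
    [Module ℝ V] [FiniteDimensional ℝ V] (hA : A.IsSymm) (L : (ι → ℝ) →ₗ[ℝ] V) {c : ℝ}
    (hL : ∀ x, L x = 0 → x ⬝ᵥ A *ᵥ x ≤ c * (x ⬝ᵥ x)) {κ : Type*} [Fintype κ] {μ : κ → ℝ}
    (hμ : Function.Injective μ) (hμc : ∀ k, c < μ k)
    (hev : ∀ k, ∃ v, v ≠ 0 ∧ A *ᵥ v = μ k • v) :
    Fintype.card κ ≤ Module.finrank ℝ V := by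
  classical
  choose u hu0 hu using hev
  have horth : Pairwise fun k l => u k ⬝ᵥ u l = 0 := fun k l hkl =>
    hA.dotProduct_eq_zero_of_mulVec_eq_smul (hu k) (hu l) (hμ.ne hkl)
  by_contra! hlt
  have hker : LinearMap.ker (L ∘ₗ Fintype.linearCombination ℝ u) ≠ ⊥ :=
    LinearMap.ker_ne_bot_of_finrank_lt (by simpa using hlt)
  obtain ⟨a, ha, ha0⟩ := Submodule.exists_mem_ne_zero_of_ne_bot hker
  obtain ⟨k, hk⟩ := Function.ne_iff.1 ha0
  set x := ∑ k, a k • u k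
  have hAx : A *ᵥ x = ∑ k, (a k * μ k) • u k := by
    simp only [x, mulVec_sum, mulVec_smul, hu, smul_smul]
  have hpos : 0 < ∑ k, a k ^ 2 * (μ k - c) * (u k ⬝ᵥ u k) := by
    refine Finset.sum_pos' (fun l _ => ?_) ⟨k, Finset.mem_univ k, ?_⟩
    · have := dotProduct_self_pos (hu0 l)
      have := sub_pos.2 (hμc l)
      positivity
    · exact mul_pos (mul_pos (sq_pos_of_ne_zero hk) (sub_pos.2 (hμc k)))
        (dotProduct_self_pos (hu0 k))
  have hle := hL x ha
  rw [hAx, dotProduct_sum_smul_sum_smul horth, dotProduct_sum_smul_sum_smul horth,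
    Finset.mul_sum, ← sub_nonpos, ← Finset.sum_sub_distrib] at hle
  refine hle.not_gt (hpos.trans_eq (Finset.sum_congr rfl fun l _ => by ring))

theorem Matrix.IsSymm.abs_dotProduct_mulVec_le (hA : A.IsSymm) (x : ι → ℝ) :
    |x ⬝ᵥ A *ᵥ x| ≤ ∑ i, (∑ j, |A i j|) * x i ^ 2 := by
  have hterm : ∀ i j, |x i * A i j * x j| ≤ |A i j| * x i ^ 2 / 2 + |A j i| * x j ^ 2 / 2 := by
    intro i j
    rw [hA.apply i j, abs_mul, abs_mul, ← sq_abs (x i), ← sq_abs (x j)]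
    nlinarith [abs_nonneg (A i j), mul_nonneg (abs_nonneg (A i j)) (sq_nonneg (|x i| - |x j|))]
  calc |x ⬝ᵥ A *ᵥ x| = |∑ i, ∑ j, x i * A i j * x j| := by
        simp only [dotProduct, mulVec, Finset.mul_sum, mul_assoc]
    _ ≤ ∑ i, ∑ j, |x i * A i j * x j| :=
        (Finset.abs_sum_le_sum_abs _ _).trans
          (Finset.sum_le_sum fun i _ => Finset.abs_sum_le_sum_abs _ _)
    _ ≤ ∑ i, ∑ j, (|A i j| * x i ^ 2 / 2 + |A j i| * x j ^ 2 / 2) := by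
        gcongr with i _ j _
        exact hterm i j
    _ = ∑ i, (∑ j, |A i j|) * x i ^ 2 := by
        rw [Finset.sum_congr rfl fun i _ => Finset.sum_add_distrib, Finset.sum_add_distrib,
          Finset.sum_comm (f := fun i j => |A j i| * x j ^ 2 / 2), ← Finset.sum_add_distrib]
        simp only [Finset.sum_mul, ← Finset.sum_add_distrib, add_halves]

end SymmetricMatrix

theorem Matrix.IsHermitian.exists_ne_eigenvalues {𝕜 ι : Type*} [RCLike 𝕜] [Fintype ι]
    [DecidableEq ι] {A : Matrix ι ι 𝕜} (hA : A.IsHermitian) {i j : ι} (hij : i ≠ j)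
    (hAij : A i j ≠ 0) :
    ∃ a b : ℝ, a ≠ b ∧ (∃ v, v ≠ 0 ∧ A *ᵥ v = a • v) ∧ (∃ v, v ≠ 0 ∧ A *ᵥ v = b • v) := by
  have hA0 : A ≠ 0 := fun h => hAij (by simp [h])
  obtain ⟨v, a, -, hv, hAv⟩ := hA.exists_eigenvector_of_ne_zero hA0
  have hB : (A - (a : 𝕜) • 1).IsHermitian := hA.sub (by simp [IsHermitian, conjTranspose_smul])
  have hB0 : A - (a : 𝕜) • 1 ≠ 0 := fun h => hAij (by
    simpa [one_apply_ne hij] using congrFun (congrFun (sub_eq_zero.1 h) i) j)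
  obtain ⟨w, t, ht, hw, hBw⟩ := hB.exists_eigenvector_of_ne_zero hB0
  refine ⟨a, a + t, by simpa using ht, ⟨v, hv, hAv⟩, ⟨w, hw, ?_⟩⟩
  rw [sub_mulVec, smul_mulVec, one_mulVec, sub_eq_iff_eq_add] at hBw
  rw [hBw, add_smul, RCLike.real_smul_eq_coe_smul (K := 𝕜) a, add_comm]

theorem Ttri_isSymm (n : ℕ) (e f : ℝ) : (Ttri n e f).IsSymm := by
  ext i j
  simp only [transpose_apply, Ttri, eq_comm (a := i), or_comm]
  split_ifs <;> simp_all

theorem Ttri_apply {n : ℕ} (e f : ℝ) (i j : Fin n) :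
    Ttri n e f i j = (if j = i then Ttri n e f i i else 0) + (if (j : ℕ) + 1 = i then 1 else 0)
      + (if (i : ℕ) + 1 = j then 1 else 0) := by
  by_cases hji : j = i
  · subst hji
    simp
  · have hji' : (j : ℕ) ≠ i := Fin.val_ne_of_ne hji
    simp only [Ttri, if_neg hji, if_neg (Ne.symm hji), zero_add]
    split_ifs <;> first | (exfalso; omega) | norm_num

theorem Ttri_apply_self {n : ℕ} (e f : ℝ) (i : Fin n) :
    Ttri n e f i i = if (i : ℕ) = 0 then e else if (i : ℕ) = n - 1 then f else 0 :=
  if_pos rfl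

theorem exists_ne_hasEigen {n : ℕ} (hn : 2 ≤ n) (e f : ℝ) :
    ∃ a b : ℝ, a ≠ b ∧ HasEigen n e f a ∧ HasEigen n e f b :=
  (isHermitian_iff_isSymm.2 (Ttri_isSymm n e f)).exists_ne_eigenvalues (i := ⟨0, by omega⟩)
    (j := ⟨1, by omega⟩) (by simp [Fin.ext_iff]) (by simp [Ttri])

theorem Ttri_neg (n : ℕ) (e f : ℝ) :
    Ttri n (-e) (-f) = -(diagonal (fun i : Fin n => (-1 : ℝ) ^ (i : ℕ)) * Ttri n e f *
      diagonal fun i : Fin n => (-1) ^ (i : ℕ)) := by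
  ext i j
  rw [neg_apply, mul_diagonal, diagonal_mul, mul_right_comm, ← pow_add]
  by_cases hji : j = i
  · subst hji
    rw [Even.neg_one_pow ⟨_, rfl⟩, one_mul, Ttri_apply_self, Ttri_apply_self]
    split_ifs <;> simp
  · have hji' : (j : ℕ) ≠ i := Fin.val_ne_of_ne hji
    rw [Ttri_apply, Ttri_apply e f, if_neg hji, if_neg hji]
    split_ifs with h1 h2 h2 <;> first | (exfalso; omega) | skip
    · rw [Odd.neg_one_pow ⟨j, by omega⟩]; ring
    · rw [Odd.neg_one_pow ⟨i, by omega⟩]; ring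
    · ring

theorem HasEigen.neg {n : ℕ} {e f x : ℝ} (h : HasEigen n e f x) : HasEigen n (-e) (-f) (-x) := by
  obtain ⟨v, hv, hTv⟩ := h
  set D : Matrix (Fin n) (Fin n) ℝ := diagonal fun i => (-1) ^ (i : ℕ)
  have hDD : D * D = 1 := by
    rw [diagonal_mul_diagonal, ← diagonal_one]
    simp [← mul_pow]
  refine ⟨D *ᵥ v, fun h => hv ?_, ?_⟩
  · rw [← one_mulVec v, ← hDD, ← mulVec_mulVec, h, mulVec_zero]
  · rw [Ttri_neg, neg_mulVec, mulVec_mulVec, mul_assoc, mul_assoc, hDD, mul_one, ← mulVec_mulVec,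
      hTv, mulVec_smul, neg_smul]

theorem sum_ite_val_add_one_eq {n : ℕ} (u : ℤ → ℝ) (i : Fin n) :
    ∑ j : Fin n, (if (j : ℕ) + 1 = i then u j else 0)
      = if (i : ℕ) = 0 then 0 else u ((i : ℕ) - 1) := by
  split_ifs with hi
  · exact Finset.sum_eq_zero fun j _ => if_neg (by omega)
  · rw [Finset.sum_eq_single ⟨i - 1, by omega⟩
      (fun j _ hj => if_neg fun h => hj (by ext; simp; omega)) (by simp)]
    simp only [if_pos (show (i : ℕ) - 1 + 1 = i by omega)]
    push_cast [show 1 ≤ (i : ℕ) by omega]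
    rfl

theorem sum_ite_eq_val_add_one {n : ℕ} (u : ℤ → ℝ) (i : Fin n) :
    ∑ j : Fin n, (if (i : ℕ) + 1 = j then u j else 0)
      = if (i : ℕ) + 1 = n then 0 else u ((i : ℕ) + 1) := by
  split_ifs with hi
  · exact Finset.sum_eq_zero fun j _ => if_neg (by omega)
  · rw [Finset.sum_eq_single ⟨i + 1, by omega⟩
      (fun j _ hj => if_neg fun h => hj (by ext; simp; omega)) (by simp)]
    simp

-- Vectors are restrictions of `ℤ`-indexed sequences, so that both neighbours of every row exist.
theorem Ttri_mulVec_apply {n : ℕ} (hn : 2 ≤ n) (e f : ℝ) (u : ℤ → ℝ) (i : Fin n) :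
    (Ttri n e f *ᵥ fun j => u j) i =
      (if (i : ℕ) = 0 then e * u i else u ((i : ℕ) - 1)) +
        (if (i : ℕ) = n - 1 then f * u i else u ((i : ℕ) + 1)) := by
  simp only [mulVec, dotProduct]
  rw [Finset.sum_congr rfl fun j _ => by rw [Ttri_apply e f i j]]
  simp only [add_mul, Finset.sum_add_distrib, ite_mul, one_mul, zero_mul, Finset.sum_ite_eq',
    Finset.mem_univ, if_true, sum_ite_val_add_one_eq, sum_ite_eq_val_add_one, Ttri_apply_self]
  split_ifs <;> first | (exfalso; omega) | ring

theorem hasEigen_of_recurrence {n : ℕ} (hn : 2 ≤ n) {e f x : ℝ} (u : ℤ → ℝ)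
    (hrec : ∀ k, u (k - 1) + u (k + 1) = x * u k) (hleft : u (-1) = e * u 0)
    (hright : u n = f * u (n - 1)) (hu0 : u 0 ≠ 0) : HasEigen n e f x := by
  refine ⟨fun j => u j, fun h => hu0 (by simpa using congrFun h ⟨0, by omega⟩), funext fun i => ?_⟩
  rw [Ttri_mulVec_apply hn, Pi.smul_apply, smul_eq_mul, ← hrec]
  split_ifs with h0 h1 h1
  · omega
  · simp [h0, hleft]
  · have : ((i : ℕ) : ℤ) = n - 1 := by omega
    rw [this, sub_add_cancel, hright]
  · rfl

-- The coefficients of the two geometric sequences are chosen to satisfy the left boundary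
-- condition for every `z`; `hsec` is the right one.
theorem hasEigen_add_inv {n : ℕ} (hn : 2 ≤ n) {e f z : ℝ} (hz0 : z ≠ 0) (hz : z ^ 2 ≠ 1)
    (hsec : (z - e) * (z - f) * z ^ (2 * n) = (e * z - 1) * (f * z - 1)) :
    HasEigen n e f (z + z⁻¹) := by
  refine hasEigen_of_recurrence hn (fun k => (z - e) * z ^ (k + 1) + (e * z - 1) * z ^ (-k))
    (fun k => ?_) ?_ ?_ ?_
  · simp only [sub_add_cancel, neg_sub, neg_add, zpow_add₀ hz0, zpow_sub₀ hz0, _root_.zpow_neg,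
      zpow_one]
    field_simp
    ring
  · simp
    ring
  · simp only [sub_add_cancel, neg_sub, zpow_add₀ hz0, zpow_sub₀ hz0, _root_.zpow_neg, zpow_one,
      zpow_natCast]
    field_simp
    linear_combination hsec
  · simp only [zero_add, zpow_one, neg_zero, zpow_zero, mul_one]
    rw [show (z - e) * z + (e * z - 1) = z ^ 2 - 1 by ring]
    exact sub_ne_zero.2 hz

theorem Ttri_eq_add_diagonal (n : ℕ) (e f : ℝ) :
    Ttri n e f = Ttri n 0 0 + diagonal fun i => Ttri n e f i i := by
  ext i j
  rw [Matrix.add_apply, diagonal_apply, Ttri_apply e f i j, Ttri_apply 0 0 i j, Ttri_apply_self 0 0,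
    ite_self, ite_self]
  by_cases h : j = i
  · subst h
    simp
  · simp [h, Ne.symm h]

theorem dotProduct_Ttri_mulVec (n : ℕ) (e f : ℝ) (x : Fin n → ℝ) :
    x ⬝ᵥ Ttri n e f *ᵥ x = x ⬝ᵥ Ttri n 0 0 *ᵥ x + ∑ i, Ttri n e f i i * x i ^ 2 := by
  conv_lhs => rw [Ttri_eq_add_diagonal]
  rw [add_mulVec, dotProduct_add]
  congr 1
  exact Finset.sum_congr rfl fun i _ => by rw [mulVec_diagonal]; ring

theorem sum_abs_Ttri_zero_le {n : ℕ} (hn : 2 ≤ n) (i : Fin n) : ∑ j, |Ttri n 0 0 i j| ≤ 2 :=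
  calc ∑ j, |Ttri n 0 0 i j| = (Ttri n 0 0 *ᵥ fun j => (fun _ : ℤ => (1 : ℝ)) j) i := by
        simp only [mulVec, dotProduct, mul_one]
        exact Finset.sum_congr rfl fun j _ => abs_of_nonneg (by unfold Ttri; split_ifs <;> norm_num)
    _ ≤ 2 := (Ttri_mulVec_apply hn 0 0 (fun _ => 1) i).trans_le (by split_ifs <;> norm_num)

theorem abs_dotProduct_Ttri_zero_mulVec_le {n : ℕ} (hn : 2 ≤ n) (x : Fin n → ℝ) :
    |x ⬝ᵥ Ttri n 0 0 *ᵥ x| ≤ 2 * (x ⬝ᵥ x) :=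
  calc |x ⬝ᵥ Ttri n 0 0 *ᵥ x| ≤ ∑ i, (∑ j, |Ttri n 0 0 i j|) * x i ^ 2 :=
        (Ttri_isSymm n 0 0).abs_dotProduct_mulVec_le x
    _ ≤ ∑ i, 2 * x i ^ 2 := by gcongr with i; exact sum_abs_Ttri_zero_le hn i
    _ = 2 * (x ⬝ᵥ x) := by simp only [dotProduct, Finset.mul_sum, sq]

theorem neg_two_le_of_hasEigen {n : ℕ} (hn : 2 ≤ n) {e f x : ℝ} (he : 0 ≤ e) (hf : 0 ≤ f)
    (h : HasEigen n e f x) : -2 ≤ x := by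
  obtain ⟨v, hv, hTv⟩ := h
  have hdiag : 0 ≤ ∑ i, Ttri n e f i i * v i ^ 2 :=
    Finset.sum_nonneg fun i _ => mul_nonneg (by rw [Ttri_apply_self]; split_ifs <;> simp [*])
      (sq_nonneg _)
  have hquad : x * (v ⬝ᵥ v) = v ⬝ᵥ Ttri n 0 0 *ᵥ v + ∑ i, Ttri n e f i i * v i ^ 2 := by
    rw [← dotProduct_Ttri_mulVec, hTv, dotProduct_smul, smul_eq_mul]
  have := neg_abs_le (v ⬝ᵥ Ttri n 0 0 *ᵥ v)
  have := abs_dotProduct_Ttri_zero_mulVec_le hn v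
  nlinarith [dotProduct_self_pos hv]

theorem dotProduct_Ttri_mulVec_le_of_boundary {n : ℕ} (hn : 2 ≤ n) (e f : ℝ) {x : Fin n → ℝ}
    (hx : ∀ i : Fin n, (i : ℕ) = 0 ∨ (i : ℕ) = n - 1 → x i = 0) :
    x ⬝ᵥ Ttri n e f *ᵥ x ≤ 2 * (x ⬝ᵥ x) := by
  have hdiag : ∑ i, Ttri n e f i i * x i ^ 2 = 0 := Finset.sum_eq_zero fun i _ => by
    by_cases hi : (i : ℕ) = 0 ∨ (i : ℕ) = n - 1
    · simp [hx i hi]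
    · obtain ⟨h0, h1⟩ := not_or.1 hi
      rw [Ttri_apply_self, if_neg h0, if_neg h1, zero_mul]
  rw [dotProduct_Ttri_mulVec, hdiag, add_zero]
  exact (le_abs_self _).trans (abs_dotProduct_Ttri_zero_mulVec_le hn x)

theorem eq_or_eq_of_hasEigen_of_two_lt {n : ℕ} (hn : 2 ≤ n) {e f a b x : ℝ} (hab : a ≠ b)
    (ha : HasEigen n e f a) (hb : HasEigen n e f b) (hx : HasEigen n e f x)
    (ha2 : 2 < a) (hb2 : 2 < b) (hx2 : 2 < x) : x = a ∨ x = b := by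
  by_contra! hxab
  let i₀ : Fin n := ⟨0, by omega⟩
  let i₁ : Fin n := ⟨n - 1, by omega⟩
  let L : (Fin n → ℝ) →ₗ[ℝ] (Fin 2 → ℝ) := LinearMap.pi ![LinearMap.proj i₀, LinearMap.proj i₁]
  have hL : ∀ y, L y = 0 → y ⬝ᵥ Ttri n e f *ᵥ y ≤ 2 * (y ⬝ᵥ y) := fun y hy =>
    dotProduct_Ttri_mulVec_le_of_boundary hn e f fun i hi => by
      rcases hi with hi | hi
      · obtain rfl : i = i₀ := Fin.ext hi
        simpa [L] using congrFun hy 0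
      · obtain rfl : i = i₁ := Fin.ext hi
        simpa [L] using congrFun hy 1
  have hinj : Function.Injective ![a, b, x] := by
    intro i j hij
    fin_cases i <;> fin_cases j <;> simp_all [eq_comm]
  have := (Ttri_isSymm n e f).card_le_finrank_of_dotProduct_mulVec_le L hL hinj
    (fun k => by fin_cases k <;> assumption) (fun k => by fin_cases k <;> assumption)
  simp at this

theorem notMem_Icc_iff_of_hasEigen {n : ℕ} (hn : 2 ≤ n) {e f a b x : ℝ} (he : 0 ≤ e)
    (hf : 0 ≤ f) (hab : a ≠ b) (ha : HasEigen n e f a) (hb : HasEigen n e f b) (ha2 : 2 < a)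
    (hb2 : 2 < b) (hx : HasEigen n e f x) : x ∉ Set.Icc (-2) 2 ↔ x = a ∨ x = b := by
  refine ⟨fun hx2 => eq_or_eq_of_hasEigen_of_two_lt hn hab ha hb hx ha2 hb2 ?_, ?_⟩
  · exact lt_of_not_ge fun h => hx2 ⟨neg_two_le_of_hasEigen hn he hf hx, h⟩
  · rintro (rfl | rfl) ⟨-, h⟩ <;> linarith

theorem add_inv_sub_add_inv {a b : ℝ} (ha : a ≠ 0) (hb : b ≠ 0) :
    b + b⁻¹ - (a + a⁻¹) = (b - a) * (1 - (a * b)⁻¹) := by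
  field_simp
  ring

theorem add_inv_lt_add_inv {a b : ℝ} (ha : 1 ≤ a) (hab : a < b) : a + a⁻¹ < b + b⁻¹ := by
  have ha0 : 0 < a := by linarith
  have hab1 : 1 < a * b := by nlinarith
  rw [← sub_pos, add_inv_sub_add_inv ha0.ne' (ha0.trans hab).ne']
  exact mul_pos (sub_pos.2 hab) (sub_pos.2 (inv_lt_one_of_one_lt₀ hab1))

theorem two_lt_add_inv {z : ℝ} (hz : 1 < z) : 2 < z + z⁻¹ := by
  simpa [one_add_one_eq_two] using add_inv_lt_add_inv le_rfl hz

theorem abs_add_inv_sub_add_inv_le {a b : ℝ} (ha : 1 ≤ a) (hb : 1 ≤ b) :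
    |b + b⁻¹ - (a + a⁻¹)| ≤ |b - a| := by
  have ha0 : 0 < a := by linarith
  have hb0 : 0 < b := by linarith
  have hab : 0 < (a * b)⁻¹ := by positivity
  have hab1 : (a * b)⁻¹ ≤ 1 := inv_le_one_of_one_le₀ (by nlinarith)
  rw [add_inv_sub_add_inv ha0.ne' hb0.ne', abs_mul]
  exact mul_le_of_le_one_right (abs_nonneg _) (abs_le.2 ⟨by linarith, by linarith⟩)

theorem eventually_sq_lt_sq_mul_pow {e t : ℝ} (ht : 1 < t) (hte : t ≠ e) :
    ∀ᶠ n : ℕ in atTop, (e * t - 1) ^ 2 < ((t - e) * t ^ n) ^ 2 := by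
  have hlim : Tendsto (fun n : ℕ => (t - e) ^ 2 * (t ^ 2) ^ n) atTop atTop :=
    (tendsto_pow_atTop_atTop_of_one_lt (by nlinarith)).const_mul_atTop
      (by positivity [sub_ne_zero.2 hte])
  filter_upwards [hlim.eventually_gt_atTop ((e * t - 1) ^ 2)] with n hn
  rwa [mul_pow, ← pow_mul, pow_mul']

theorem eventually_exists_secular_roots {e r : ℝ} (hr : 1 < r) (hre : r < e) :
    ∀ᶠ n : ℕ in atTop, ∃ z₁ ∈ Set.Ioo r e, ∃ z₂ ∈ Set.Ioo e (e + 1),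
      ((z₁ - e) * z₁ ^ n) ^ 2 = (e * z₁ - 1) ^ 2 ∧ ((z₂ - e) * z₂ ^ n) ^ 2 = (e * z₂ - 1) ^ 2 := by
  filter_upwards [eventually_sq_lt_sq_mul_pow hr hre.ne,
    eventually_sq_lt_sq_mul_pow (t := e + 1) (by linarith) (by linarith)] with n hr' he'
  set g : ℝ → ℝ := fun z => ((z - e) * z ^ n) ^ 2 - (e * z - 1) ^ 2
  have hg : Continuous g := by fun_prop
  have hge : g e < 0 := by
    have : 0 < e * e - 1 := by nlinarith
    simp only [g, sub_self, zero_mul]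
    nlinarith
  obtain ⟨z₁, hz₁, hgz₁⟩ := intermediate_value_Ioo' hre.le hg.continuousOn
    ⟨hge, sub_pos.2 hr'⟩
  obtain ⟨z₂, hz₂, hgz₂⟩ := intermediate_value_Ioo (by linarith : e ≤ e + 1) hg.continuousOn
    ⟨hge, sub_pos.2 he'⟩
  exact ⟨z₁, hz₁, z₂, hz₂, sub_eq_zero.1 hgz₁, sub_eq_zero.1 hgz₂⟩

theorem abs_sub_le_of_secular {e r z : ℝ} {n : ℕ} (he : 1 ≤ e) (hr : 1 ≤ r) (hrz : r ≤ z)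
    (hze : z ≤ e + 1) (hsec : ((z - e) * z ^ n) ^ 2 = (e * z - 1) ^ 2) :
    |z - e| ≤ e * (e + 1) / r ^ n := by
  have hz : 0 < z := by linarith
  have habs : |z - e| * z ^ n = |e * z - 1| := by
    rw [← abs_of_pos (pow_pos hz n), ← abs_mul]
    exact (sq_eq_sq_iff_abs_eq_abs _ _).1 hsec
  rw [le_div_iff₀ (by positivity)]
  calc |z - e| * r ^ n ≤ |z - e| * z ^ n := by gcongr
    _ = |e * z - 1| := habs
    _ ≤ e * (e + 1) := abs_le.2 ⟨by nlinarith, by nlinarith⟩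

theorem eventually_exists_outliers {e r : ℝ} (hr : 1 < r) (hre : r < e) :
    ∀ᶠ n : ℕ in atTop, ∃ a b : ℝ, (a ≠ b ∧ HasEigen n e e a ∧ HasEigen n e e b) ∧
      (2 < a ∧ 2 < b ∧ |a - (e + e⁻¹)| ≤ e * (e + 1) / r ^ n ∧
        |b - (e + e⁻¹)| ≤ e * (e + 1) / r ^ n) := by
  filter_upwards [eventually_exists_secular_roots hr hre, eventually_ge_atTop 2]
    with n ⟨z₁, ⟨hrz₁, hz₁e⟩, z₂, ⟨hez₂, hz₂e⟩, hsec₁, hsec₂⟩ hn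
  have hz₁ : 1 < z₁ := hr.trans hrz₁
  have hz₂ : 1 < z₂ := by linarith
  have heig : ∀ z, 1 < z → ((z - e) * z ^ n) ^ 2 = (e * z - 1) ^ 2 → HasEigen n e e (z + z⁻¹) :=
    fun z hz hsec => hasEigen_add_inv hn (by positivity) (by nlinarith)
      (by rw [mul_comm 2 n, pow_mul']; linear_combination hsec)
  refine ⟨z₁ + z₁⁻¹, z₂ + z₂⁻¹, ⟨?_, heig z₁ hz₁ hsec₁, heig z₂ hz₂ hsec₂⟩, two_lt_add_inv hz₁,
    two_lt_add_inv hz₂, ?_, ?_⟩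
  · exact ((add_inv_lt_add_inv hz₁.le hz₁e).trans (add_inv_lt_add_inv (by linarith) hez₂)).ne
  · exact (abs_add_inv_sub_add_inv_le (by linarith) hz₁.le).trans
      (abs_sub_le_of_secular (by linarith) hr.le hrz₁.le (by linarith) hsec₁)
  · exact (abs_add_inv_sub_add_inv_le (by linarith) hz₂.le).trans
      (abs_sub_le_of_secular (by linarith) hr.le (by linarith) hz₂e.le hsec₂)

theorem exists_seqs_of_forall_of_eventually {α : Type*} [Nonempty α] {p : ℕ → Prop}
    {P Q : ℕ → α → α → Prop} (hP : ∀ n, p n → ∃ a b, P n a b)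
    (hQ : ∀ᶠ n in atTop, ∃ a b, P n a b ∧ Q n a b) :
    ∃ u v : ℕ → α, (∀ n, p n → P n (u n) (v n)) ∧ ∀ᶠ n in atTop, Q n (u n) (v n) := by
  obtain ⟨N, hN⟩ := eventually_atTop.1 hQ
  have : ∀ n, ∃ a b, (p n → P n a b) ∧ (N ≤ n → Q n a b) := fun n => by
    by_cases hn : N ≤ n
    · obtain ⟨a, b, hab⟩ := hN n hn
      exact ⟨a, b, fun _ => hab.1, fun _ => hab.2⟩
    by_cases hpn : p n
    · obtain ⟨a, b, hab⟩ := hP n hpn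
      exact ⟨a, b, fun _ => hab, fun h => absurd h hn⟩
    · exact ⟨Classical.arbitrary α, Classical.arbitrary α, fun h => absurd h hpn,
        fun h => absurd h hn⟩
  choose u v huv using this
  exact ⟨u, v, fun n => (huv n).1, eventually_atTop.2 ⟨N, fun n => (huv n).2⟩⟩

theorem outliers_of_one_lt {e : ℝ} (he : 1 < e) :
    ∃ mu nu : ℕ → ℝ,
      (∀ n, 2 ≤ n → mu n ≠ nu n ∧ HasEigen n e e (mu n) ∧ HasEigen n e e (nu n)) ∧
      Tendsto mu atTop (nhds (e + e⁻¹)) ∧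
      Tendsto nu atTop (nhds (e + e⁻¹)) ∧
      ∀ᶠ n in atTop, ∀ lam : ℝ, HasEigen n e e lam →
        (lam ∉ Set.Icc (-2 : ℝ) 2 ↔ (lam = mu n ∨ lam = nu n)) := by
  obtain ⟨r, hr, hre⟩ := exists_between he
  obtain ⟨mu, nu, hpair, hout⟩ := exists_seqs_of_forall_of_eventually
    (fun n hn => exists_ne_hasEigen hn e e) (eventually_exists_outliers hr hre)
  have hlim : ∀ s : ℕ → ℝ, (∀ᶠ n in atTop, |s n - (e + e⁻¹)| ≤ e * (e + 1) / r ^ n) →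
      Tendsto s atTop (nhds (e + e⁻¹)) := fun s hs =>
    tendsto_iff_norm_sub_tendsto_zero.2 (squeeze_zero' (.of_forall fun n => norm_nonneg _) hs
      (tendsto_const_nhds.div_atTop (tendsto_pow_atTop_atTop_of_one_lt hr)))
  refine ⟨mu, nu, hpair, hlim mu (hout.mono fun n h => h.2.2.1),
    hlim nu (hout.mono fun n h => h.2.2.2), ?_⟩
  filter_upwards [hout, eventually_ge_atTop 2] with n hn2 hn lam hlam
  obtain ⟨ha2, hb2, -, -⟩ := hn2
  obtain ⟨hab, ha, hb⟩ := hpair n hn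
  exact notMem_Icc_iff_of_hasEigen hn (by linarith) (by linarith) hab ha hb ha2 hb2 hlam

theorem stmt10 (e f : ℝ) (he : 1 < |e|) (hef : e = f) :
    ∃ mu nu : ℕ → ℝ,
      (∀ n, 2 ≤ n → mu n ≠ nu n ∧ HasEigen n e f (mu n) ∧ HasEigen n e f (nu n)) ∧
      Tendsto mu atTop (nhds (e + e⁻¹)) ∧
      Tendsto nu atTop (nhds (e + e⁻¹)) ∧
      ∀ᶠ n in atTop, ∀ lam : ℝ, HasEigen n e f lam →
        (lam ∉ Set.Icc (-2 : ℝ) 2 ↔ (lam = mu n ∨ lam = nu n)) := by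
  subst hef
  rcases le_or_gt 0 e with he0 | he0
  · exact outliers_of_one_lt (by rwa [abs_of_nonneg he0] at he)
  obtain ⟨mu, nu, hpair, hmu, hnu, hout⟩ :=
    outliers_of_one_lt (e := -e) (by rwa [abs_of_neg he0] at he)
  have hlim : e + e⁻¹ = -(-e + (-e)⁻¹) := by rw [inv_neg]; ring
  refine ⟨-mu, -nu, fun n hn => ?_, hlim ▸ hmu.neg, hlim ▸ hnu.neg, ?_⟩
  · obtain ⟨hne, hmu, hnu⟩ := hpair n hn
    exact ⟨neg_injective.ne hne, by simpa using hmu.neg, by simpa using hnu.neg⟩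
  · filter_upwards [hout] with n hn lam hlam
    have h := hn (-lam) hlam.neg
    rw [Set.neg_mem_Icc_iff, neg_neg] at h
    simpa [neg_eq_iff_eq_neg] using h
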